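/- arXiv:2102.03105 — 2 statements merged into one kernel-verified Lean document; each statement's English description precedes it below -/
import Mathlib

section
/- Correctness of the reduction step for a nondecreasing objective: let f : ℝⁿ → ℝ be nondecreasing (componentwise), let M = [r, s] be a box, and γ ∈ ℝ with f(r) ≤ γ. Define s'_i = min(s_i, x̃_i) where x̃_i is any value such that every x ∈ M with x_i > x̃_i and x_j = r_j for j ≠ i satisfies f(x) > γ. Then {x ∈ [r, s] : f(x) ≤ γ} = {x ∈ [r, s'] : f(x) ≤ γ}, where s' = (s'_1, ..., s'_n). -/
open Finset

/-- Correctness of the reduction step for a nondecreasing objective.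
If every point of the box with `j`-th coordinate exceeding `x̃ j` and all other
coordinates at the lower corner `r` has objective value above `γ`, then shrinking
the upper corner to `s' i = min (s i) (x̃ i)` does not remove any feasible point. -/
theorem reduction_correct {n : ℕ} (f : (Fin n → ℝ) → ℝ) (hf : Monotone f)
    (r s : Fin n → ℝ) (hrs : r ≤ s) (γ : ℝ) (hfr : f r ≤ γ)
    (xt : Fin n → ℝ)
    (hxt : ∀ i, ∀ x ∈ Set.Icc r s, xt i < x i → (∀ j, j ≠ i → x j = r j) → γ < f x) :
    {x ∈ Set.Icc r s | f x ≤ γ}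
      = {x ∈ Set.Icc r (fun i => min (s i) (xt i)) | f x ≤ γ} := by
  ext x
  simp only [Set.mem_setOf_eq, Set.mem_Icc]
  constructor
  · rintro ⟨⟨hrx, hxs⟩, hfx⟩
    refine ⟨⟨hrx, fun i => le_min (hxs i) ?_⟩, hfx⟩
    by_contra h
    push_neg at h
    set y := Function.update r i (x i) with hy
    have hyr : r ≤ y := fun j => by
      by_cases hji : j = i
      · subst hji; simp [hy, hrx j]
      · simp [hy, Function.update_of_ne hji]
    have hyx : y ≤ x := fun j => by
      by_cases hji : j = i
      · subst hji; simp [hy]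
      · simp [hy, Function.update_of_ne hji, hrx j]
    have hys : y ≤ s := hyx.trans hxs
    have := hxt i y ⟨hyr, hys⟩ (by simpa [hy] using h)
      (fun j hj => Function.update_of_ne hj _ _)
    exact absurd ((hf hyx).trans hfx) (not_le.mpr this)
  · rintro ⟨⟨hrx, hxs⟩, hfx⟩
    exact ⟨⟨hrx, fun i => (hxs i).trans (min_le_left _ _)⟩, hfx⟩
end

section
/- Exhaustiveness of bisection along the longest edge: if a sequence of boxes M_k = [r^k, s^k] is generated by repeatedly bisecting at the midpoint along a coordinate of maximal edge length (M_{k+1} is one of the two halves of M_k), then the diameter of M_k converges to 0 as k → ∞. -/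
open Filter Topology

lemma sum_update_eq {n : ℕ} (f : Fin n → ℝ) (j : Fin n) (b : ℝ) :
    ∑ i, Function.update f j b i = ∑ i, f i - f j + b := by
  rw [Finset.sum_update_of_mem (Finset.mem_univ j)]
  have h := Finset.sum_eq_sum_sdiff_singleton_add (Finset.mem_univ j) f
  linarith

/-- Exhaustiveness of bisection along the longest edge. If each
box `M (k+1) = [r (k+1), s (k+1)]` is one of the two halves obtained from
`M k = [r k, s k]` by bisecting at the midpoint along a coordinate of maximal
edge length, then the diameter of `M k` (sup norm of `s k − r k`) tends to `0`. -/
theorem bisection_exhaustive {n : ℕ} (r s : ℕ → Fin n → ℝ)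
    (hbox : ∀ k, r k ≤ s k)
    (hbisect : ∀ k, ∃ j : Fin n, (∀ i, s k i - r k i ≤ s k j - r k j) ∧
      ((r (k + 1) = r k ∧
          s (k + 1) = Function.update (s k) j ((r k j + s k j) / 2)) ∨
       (r (k + 1) = Function.update (r k) j ((r k j + s k j) / 2) ∧
          s (k + 1) = s k))) :
    Tendsto (fun k => ‖s k - r k‖) atTop (𝓝 0) := by
  rcases Nat.eq_zero_or_pos n with hn | hn
  · subst hn
    have : (fun k => ‖s k - r k‖) = fun _ => 0 := by
      funext k
      rw [Subsingleton.elim (s k - r k) 0, norm_zero]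
    rw [this]
    exact tendsto_const_nhds
  · have hnpos : (0 : ℝ) < n := by exact_mod_cast hn
    set T : ℕ → ℝ := fun k => ∑ i, (s k i - r k i) with hT
    set q : ℝ := 1 - 1 / (2 * n) with hqdef
    have hn1 : (1 : ℝ) ≤ n := by exact_mod_cast hn
    have hq0 : 0 ≤ q := by
      have : 1 / (2 * (n : ℝ)) ≤ 1 := by
        rw [div_le_one (by linarith)]
        linarith
      simp only [hqdef]; linarith
    have hq1 : q < 1 := by
      have : 0 < 1 / (2 * (n : ℝ)) := by positivity
      simp only [hqdef]; linarith
    have hTnn : ∀ k, 0 ≤ T k := by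
      intro k
      apply Finset.sum_nonneg
      intro i _
      have := hbox k i
      linarith
    have key : ∀ k, T (k + 1) ≤ q * T k := by
      intro k
      obtain ⟨j, hmax, hcase⟩ := hbisect k
      have hTstep : T (k + 1) = T k - (s k j - r k j) / 2 := by
        rcases hcase with ⟨hr, hs⟩ | ⟨hr, hs⟩ <;>
          simp only [hT, hr, hs, Finset.sum_sub_distrib, sum_update_eq] <;> ring
      have hsum_le : T k ≤ n * (s k j - r k j) := by
        calc T k ≤ ∑ _i : Fin n, (s k j - r k j) :=
              Finset.sum_le_sum fun i _ => hmax i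
          _ = n * (s k j - r k j) := by
              rw [Finset.sum_const, Finset.card_univ, Fintype.card_fin, nsmul_eq_mul]
      have hdiv : T k / (2 * n) ≤ (s k j - r k j) / 2 := by
        rw [div_le_div_iff₀ (by linarith) (by norm_num)]
        nlinarith
      have hqT : q * T k = T k - T k / (2 * n) := by
        simp only [hqdef]; ring
      rw [hTstep, hqT]
      linarith
    have hgeom : ∀ k, T k ≤ T 0 * q ^ k := by
      intro k
      induction k with
      | zero => simp
      | succ m ih =>
        calc T (m + 1) ≤ q * T m := key m
          _ ≤ q * (T 0 * q ^ m) := mul_le_mul_of_nonneg_left ih hq0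
          _ = T 0 * q ^ (m + 1) := by ring
    have hnorm : ∀ k, ‖s k - r k‖ ≤ T k := by
      intro k
      apply pi_norm_le_iff_of_nonneg (hTnn k) |>.2
      intro i
      rw [Pi.sub_apply, Real.norm_eq_abs, abs_of_nonneg (by linarith [hbox k i])]
      exact Finset.single_le_sum (f := fun i => s k i - r k i)
        (fun l _ => sub_nonneg.2 ((hbox k) l)) (Finset.mem_univ i)
    have hlim : Tendsto (fun k => T 0 * q ^ k) atTop (𝓝 0) := by
      have := (tendsto_pow_atTop_nhds_zero_of_lt_one hq0 hq1).const_mul (T 0)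
      simpa using this
    exact squeeze_zero (fun k => norm_nonneg _)
      (fun k => (hnorm k).trans (hgeom k)) hlim
end
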